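/- arXiv:1407.2373 — 2 statements merged into one kernel-verified Lean document; each statement's English description precedes it below -/
import Mathlib

section
/- For an odd prime p, the ring of integers of ℚ(ζ_p + ζ_p^{-1}) is ℤ[ζ_p + ζ_p^{-1}]. -/
/-!
Let `η = ζ + ζ⁻¹`. Since `ζ² = ηζ - 1`, every element of `ℤ[ζ]` can be written as `a + bζ` with
`a, b ∈ ℤ[η]`. An algebraic integer `y` of `ℚ(η)` lies in `ℤ[ζ]`, the ring of integers of `ℚ(ζ)`,
so `y = a + bζ`. Complex conjugation fixes `ℚ(η)` and sends `ζ` to `ζ⁻¹`, hence `b (ζ - ζ⁻¹) = 0`,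
and `ζ ≠ ζ⁻¹` because the order of `ζ` exceeds `2`. Thus `y = a ∈ ℤ[η]`.
-/

open IntermediateField ComplexConjugate

theorem Algebra.exists_add_mul_eq_of_mem_adjoin {R A : Type*} [CommRing R] [CommRing A]
    [Algebra R A] {z w y : A} (hzw : z * w = 1) (hy : y ∈ Algebra.adjoin R {z}) :
    ∃ a ∈ Algebra.adjoin R {z + w}, ∃ b ∈ Algebra.adjoin R {z + w}, a + b * z = y := by
  have hη : z + w ∈ Algebra.adjoin R {z + w} := Algebra.self_mem_adjoin_singleton R _
  induction hy using Algebra.adjoin_induction with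
  | mem y hy =>
    obtain rfl := Set.mem_singleton_iff.mp hy
    exact ⟨0, zero_mem _, 1, one_mem _, by ring⟩
  | algebraMap r => exact ⟨algebraMap R A r, Subalgebra.algebraMap_mem _ r, 0, zero_mem _, by ring⟩
  | add y y' _ _ ih ih' =>
    obtain ⟨a, ha, b, hb, rfl⟩ := ih
    obtain ⟨c, hc, d, hd, rfl⟩ := ih'
    exact ⟨a + c, add_mem ha hc, b + d, add_mem hb hd, by ring⟩
  | mul y y' _ _ ih ih' =>
    obtain ⟨a, ha, b, hb, rfl⟩ := ih
    obtain ⟨c, hc, d, hd, rfl⟩ := ih'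
    -- `z ^ 2 = (z + w) * z - 1`
    refine ⟨a * c - b * d, sub_mem (mul_mem ha hc) (mul_mem hb hd),
      a * d + b * c + b * d * (z + w), add_mem (add_mem (mul_mem ha hd) (mul_mem hb hc))
        (mul_mem (mul_mem hb hd) hη), ?_⟩
    linear_combination b * d * hzw

theorem Complex.conj_eq_self_of_mem_adjoin_add_inv {ζ y : ℂ} (hζ : ‖ζ‖ = 1)
    (hy : y ∈ ℚ⟮ζ + ζ⁻¹⟯) : conj y = y := by
  refine (forall_mem_adjoin_smul_eq_self_iff ℚ (S := {ζ + ζ⁻¹})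
    (Complex.conjAe.restrictScalars ℚ)).2 ?_ y hy
  rintro _ rfl
  simp [AlgEquiv.smul_def, ← Complex.inv_eq_conj hζ, add_comm]

theorem IsPrimitiveRoot.mem_adjoin_of_isIntegral {L : Type*} [Field L] [CharZero L] {n : ℕ}
    [NeZero n] {ζ : L} (hζ : IsPrimitiveRoot ζ n) {y : L} (hy : y ∈ ℚ⟮ζ⟯)
    (hyint : IsIntegral ℤ y) : y ∈ Algebra.adjoin ℤ {ζ} := by
  have : IsCyclotomicExtension {n} ℚ ℚ⟮ζ⟯ := by
    have := hζ.adjoin_isCyclotomicExtension ℚ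
    exact IsCyclotomicExtension.equiv _ ℚ _ (Subalgebra.equivOfEq _ _
      (adjoin_simple_toSubalgebra_of_isAlgebraic
        (hζ.isIntegral (NeZero.pos n)).tower_top.isAlgebraic).symm)
  have := IsCyclotomicExtension.Rat.isIntegralClosure_adjoin_singleton
    (IsPrimitiveRoot.coe_submonoidClass_iff.mp hζ : IsPrimitiveRoot (AdjoinSimple.gen ℚ ζ) n)
  obtain ⟨u, hu⟩ := IsIntegralClosure.isIntegral_iff
    (A := Algebra.adjoin ℤ {AdjoinSimple.gen ℚ ζ}) |>.1 <|
    (isIntegral_algebraMap_iff (algebraMap ℚ⟮ζ⟯ L).injective).1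
      (show IsIntegral ℤ (algebraMap ℚ⟮ζ⟯ L ⟨y, hy⟩) from hyint)
  have hyu : IsScalarTower.toAlgHom ℤ ℚ⟮ζ⟯ L u = y := congrArg Subtype.val hu
  have hmap := AlgHom.map_adjoin_singleton (IsScalarTower.toAlgHom ℤ ℚ⟮ζ⟯ L) (AdjoinSimple.gen ℚ ζ)
  rw [IsScalarTower.coe_toAlgHom', AdjoinSimple.algebraMap_gen] at hmap
  exact hyu ▸ hmap ▸ Subalgebra.mem_map.2 ⟨u, u.2, rfl⟩

theorem IsPrimitiveRoot.mem_adjoin_add_inv_of_isIntegral {n : ℕ} (hn : 2 < n) {ζ : ℂ}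
    (hζ : IsPrimitiveRoot ζ n) {y : ℂ} (hy : y ∈ ℚ⟮ζ + ζ⁻¹⟯) (hyint : IsIntegral ℤ y) :
    y ∈ Algebra.adjoin ℤ {ζ + ζ⁻¹} := by
  have : NeZero n := ⟨by omega⟩
  have hnorm : ‖ζ‖ = 1 := hζ.norm'_eq_one (NeZero.ne n)
  have hζ0 : ζ ≠ 0 := hζ.ne_zero (NeZero.ne n)
  have hyζ : y ∈ Algebra.adjoin ℤ {ζ} := hζ.mem_adjoin_of_isIntegral
    (adjoin_simple_le_iff.2 (add_mem (mem_adjoin_simple_self ℚ ζ)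
      (inv_mem (mem_adjoin_simple_self ℚ ζ))) hy) hyint
  obtain ⟨a, ha, b, hb, rfl⟩ := Algebra.exists_add_mul_eq_of_mem_adjoin (mul_inv_cancel₀ hζ0) hyζ
  have hreal : ∀ v ∈ Algebra.adjoin ℤ {ζ + ζ⁻¹}, conj v = v := fun v hv ↦
    Complex.conj_eq_self_of_mem_adjoin_add_inv hnorm <| Algebra.adjoin_le
      (S := ℚ⟮ζ + ζ⁻¹⟯.toSubalgebra.restrictScalars ℤ)
      (Set.singleton_subset_iff.2 (mem_adjoin_simple_self ℚ _)) hv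
  have hb_mul : b * (ζ - ζ⁻¹) = 0 := by
    have := Complex.conj_eq_self_of_mem_adjoin_add_inv hnorm hy
    rw [map_add, map_mul, hreal a ha, hreal b hb, ← Complex.inv_eq_conj hnorm] at this
    linear_combination -this
  have hζ_ne_inv : ζ - ζ⁻¹ ≠ 0 := by
    have hsq : ζ ^ 2 ≠ 1 := hζ.pow_ne_one_of_pos_of_lt two_ne_zero hn
    contrapose! hsq
    linear_combination ζ * hsq + mul_inv_cancel₀ hζ0
  rw [(mul_eq_zero.1 hb_mul).resolve_right hζ_ne_inv, zero_mul, add_zero]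
  exact ha

/-- For an odd prime `p`, the ring of integers of `ℚ(ζ_p + ζ_p⁻¹)` is
`ℤ[ζ_p + ζ_p⁻¹]`. -/
theorem ringOfIntegers_eq_adjoin (p : ℕ) (hp : p.Prime) (hodd : Odd p)
    (ζ : ℂ) (hζ : IsPrimitiveRoot ζ p)
    (K : IntermediateField ℚ ℂ) (hK : K = IntermediateField.adjoin ℚ {ζ + ζ⁻¹})
    (x : K) (hx : (x : ℂ) = ζ + ζ⁻¹) :
    integralClosure ℤ K = Algebra.adjoin ℤ {x} := by
  have hp2 : 2 < p := by
    obtain ⟨k, rfl⟩ := hodd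
    have := hp.two_le
    omega
  have hxint : IsIntegral ℤ x := by
    rw [← isIntegral_algebraMap_iff (algebraMap K ℂ).injective]
    change IsIntegral ℤ (x : ℂ)
    exact hx ▸ (hζ.isIntegral hp.pos).add (hζ.inv.isIntegral hp.pos)
  refine le_antisymm (fun y hy ↦ ?_) (Algebra.adjoin_le (Set.singleton_subset_iff.2 hxint))
  have hyη : (y : ℂ) ∈ Algebra.adjoin ℤ {ζ + ζ⁻¹} := hζ.mem_adjoin_add_inv_of_isIntegral hp2
    (hK ▸ y.2) ((isIntegral_algebraMap_iff (algebraMap K ℂ).injective).2 hy)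
  have hmap : (y : ℂ) ∈ (Algebra.adjoin ℤ {x}).map (IsScalarTower.toAlgHom ℤ K ℂ) := by
    rwa [AlgHom.map_adjoin_singleton, IsScalarTower.coe_toAlgHom',
      IntermediateField.algebraMap_apply, hx]
  obtain ⟨y', hy', hyy'⟩ := Subalgebra.mem_map.1 hmap
  exact Subtype.ext hyy' ▸ hy'
end

section
/- Let K be a Galois number field with ring of integers O, and let x, y ∈ O with |N(x)| = pq and |N(y)| = q, where p and q are rational primes unramified in K with p ≠ q. Then there exists σ ∈ Gal(K/ℚ) such that x/σ(y) ∈ O and |N(x/σ(y))| = p. -/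
/-!
The principal ideal `(y)` has prime absolute norm `q`, so it is a prime ideal. Since `q` divides
`N(x) = ∏ σ σ(x)` and `q ∈ (y)`, this product lies in `(y)`, hence so does one factor `σ(x)`;
that is, `σ⁻¹(y) ∣ x` in `O`. The norm of the quotient is then `N(x) / N(y) = ±p`.
-/

open NumberField Ideal

namespace NumberField.RingOfIntegers

variable {K : Type*} [Field K] [NumberField K] [IsGalois ℚ K]

theorem prod_galois_apply_eq_norm (w : 𝓞 K) :
    ∏ σ : K ≃ₐ[ℚ] K, σ (w : K) = ((Algebra.norm ℤ w : ℤ) : K) := by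
  rw [← Algebra.norm_eq_prod_automorphisms, ← Algebra.coe_norm_int, eq_ratCast, Rat.cast_intCast]

theorem algebraMap_norm_eq_prod_smul (w : 𝓞 K) :
    algebraMap ℤ (𝓞 K) (Algebra.norm ℤ w) = ∏ σ : K ≃ₐ[ℚ] K, σ • w := by
  ext
  simp only [eq_intCast, map_intCast, map_prod]
  exact (prod_galois_apply_eq_norm w).symm

theorem absNorm_span_singleton_eq_of_prod {w : 𝓞 K} {n : ℕ}
    (h : ∏ σ : K ≃ₐ[ℚ] K, σ (w : K) = n ∨ ∏ σ : K ≃ₐ[ℚ] K, σ (w : K) = -n) :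
    absNorm (span {w}) = n := by
  rw [absNorm_span_singleton, Int.natAbs_eq_iff]
  simpa only [prod_galois_apply_eq_norm, ← Int.cast_natCast (R := K), ← Int.cast_neg,
    Int.cast_inj] using h

theorem exists_smul_mem_of_absNorm_mem (P : Ideal (𝓞 K)) [P.IsPrime] (w : 𝓞 K)
    (h : (absNorm (span {w}) : 𝓞 K) ∈ P) : ∃ σ : K ≃ₐ[ℚ] K, σ • w ∈ P := by
  have hnorm : algebraMap ℤ (𝓞 K) (Algebra.norm ℤ w) ∈ P := by
    rw [absNorm_span_singleton] at h
    rcases Int.natAbs_eq (Algebra.norm ℤ w) with hn | hn <;> rw [hn] <;> simpa using h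
  rw [algebraMap_norm_eq_prod_smul, IsPrime.prod_mem_iff] at hnorm
  obtain ⟨σ, -, hσ⟩ := hnorm
  exact ⟨σ, hσ⟩

theorem exists_smul_dvd_of_absNorm_dvd {x y : 𝓞 K} (hy : (absNorm (span {y})).Prime)
    (h : absNorm (span {y}) ∣ absNorm (span {x})) : ∃ σ : K ≃ₐ[ℚ] K, σ • y ∣ x := by
  have : (span {y}).IsPrime := isPrime_of_irreducible_absNorm hy
  obtain ⟨c, hc⟩ := h
  have hmem : (absNorm (span {x}) : 𝓞 K) ∈ span {y} := by
    rw [hc, Nat.cast_mul]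
    exact mul_mem_right _ _ (absNorm_mem _)
  obtain ⟨σ, hσ⟩ := exists_smul_mem_of_absNorm_mem _ x hmem
  refine ⟨σ⁻¹, ?_⟩
  simpa using map_dvd (MulSemiringAction.toRingHom _ (𝓞 K) σ⁻¹) (mem_span_singleton.mp hσ)

theorem exists_isIntegral_div_galois_conj {x y : 𝓞 K} (hy : (absNorm (span {y})).Prime)
    (h : absNorm (span {y}) ∣ absNorm (span {x})) :
    ∃ σ : K ≃ₐ[ℚ] K, IsIntegral ℤ ((x : K) / σ (y : K)) := by
  obtain ⟨σ, z, hz⟩ := exists_smul_dvd_of_absNorm_dvd hy h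
  have hy0 : (y : K) ≠ 0 := by
    rintro hy0
    rw [coe_eq_zero_iff.mp hy0, span_singleton_eq_bot.mpr rfl, absNorm_bot] at hy
    exact Nat.not_prime_zero hy
  have hx : (x : K) = σ (y : K) * z := congrArg ((↑) : 𝓞 K → K) hz
  refine ⟨σ, ?_⟩
  rw [hx, mul_div_cancel_left₀ _ (map_ne_zero σ |>.mpr hy0)]
  exact z.isIntegral_coe

end NumberField.RingOfIntegers

theorem AlgEquiv.prod_apply_div_apply {F L : Type*} [Field F] [Field L] [Algebra F L]
    [Fintype (L ≃ₐ[F] L)] (x y : L) (σ : L ≃ₐ[F] L) :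
    ∏ τ : L ≃ₐ[F] L, τ (x / σ y) = (∏ τ : L ≃ₐ[F] L, τ x) / ∏ τ : L ≃ₐ[F] L, τ y := by
  rw [← Fintype.prod_equiv (Equiv.mulRight σ) (fun τ => (τ * σ) y) (fun τ => τ y) fun _ => rfl,
    ← Finset.prod_div_distrib]
  simp only [map_div₀, AlgEquiv.mul_apply]

theorem div_eq_or_eq_neg_of_eq_or_eq_neg {F : Type*} [Field F] {a b m n : F} (hn : n ≠ 0)
    (ha : a = m * n ∨ a = -(m * n)) (hb : b = n ∨ b = -n) : a / b = m ∨ a / b = -m := by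
  rcases ha with rfl | rfl <;> rcases hb with rfl | rfl <;> field_simp <;> simp

theorem quotient_norm_general (K : Type*) [Field K] [NumberField K] [IsGalois ℚ K]
    (x y : K) (hx : IsIntegral ℤ x) (hy : IsIntegral ℤ y)
    (p q : ℕ) (hq : q.Prime)
    (hnx : (∏ σ : K ≃ₐ[ℚ] K, σ x) = ((p * q : ℕ) : K) ∨
      (∏ σ : K ≃ₐ[ℚ] K, σ x) = -((p * q : ℕ) : K))
    (hny : (∏ σ : K ≃ₐ[ℚ] K, σ y) = (q : K) ∨
      (∏ σ : K ≃ₐ[ℚ] K, σ y) = -(q : K)) :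
    ∃ σ : K ≃ₐ[ℚ] K, IsIntegral ℤ (x / σ y) ∧
      ((∏ τ : K ≃ₐ[ℚ] K, τ (x / σ y)) = (p : K) ∨
        (∏ τ : K ≃ₐ[ℚ] K, τ (x / σ y)) = -(p : K)) := by
  let X : 𝓞 K := ⟨x, hx⟩
  let Y : 𝓞 K := ⟨y, hy⟩
  have hNX : absNorm (span {X}) = p * q := RingOfIntegers.absNorm_span_singleton_eq_of_prod hnx
  have hNY : absNorm (span {Y}) = q := RingOfIntegers.absNorm_span_singleton_eq_of_prod hny
  obtain ⟨σ, hσ⟩ := RingOfIntegers.exists_isIntegral_div_galois_conj (x := X) (y := Y)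
    (hNY ▸ hq) (by rw [hNX, hNY]; exact dvd_mul_left q p)
  refine ⟨σ, hσ, ?_⟩
  rw [AlgEquiv.prod_apply_div_apply]
  push_cast at hnx
  exact div_eq_or_eq_neg_of_eq_or_eq_neg (Nat.cast_ne_zero.mpr hq.ne_zero) hnx hny

/-- Let `K` be a Galois number field and `x, y` algebraic integers of `K` with
`|N(x)| = p * q` and `|N(y)| = q`, where `p ≠ q` are rational primes unramified
in `K`.  Then for some `σ ∈ Gal(K/ℚ)`, `x / σ(y)` is an algebraic integer of
norm `±p`. -/
theorem quotient_norm (K : Type*) [Field K] [NumberField K] [IsGalois ℚ K]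
    (x y : K) (hx : IsIntegral ℤ x) (hy : IsIntegral ℤ y)
    (p q : ℕ) (hp : p.Prime) (hq : q.Prime) (hpq : p ≠ q)
    (hpunram : ∀ P : Ideal (𝓞 K), P.IsMaximal → (p : 𝓞 K) ∈ P →
      ramificationIdx' (span {(p : ℤ)}) P = 1)
    (hqunram : ∀ P : Ideal (𝓞 K), P.IsMaximal → (q : 𝓞 K) ∈ P →
      ramificationIdx' (span {(q : ℤ)}) P = 1)
    (hnx : (∏ σ : K ≃ₐ[ℚ] K, σ x) = ((p * q : ℕ) : K) ∨
      (∏ σ : K ≃ₐ[ℚ] K, σ x) = -((p * q : ℕ) : K))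
    (hny : (∏ σ : K ≃ₐ[ℚ] K, σ y) = (q : K) ∨
      (∏ σ : K ≃ₐ[ℚ] K, σ y) = -(q : K)) :
    ∃ σ : K ≃ₐ[ℚ] K, IsIntegral ℤ (x / σ y) ∧
      ((∏ τ : K ≃ₐ[ℚ] K, τ (x / σ y)) = (p : K) ∨
        (∏ τ : K ≃ₐ[ℚ] K, τ (x / σ y)) = -(p : K)) :=
  quotient_norm_general K x y hx hy p q hq hnx hny
end
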